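/- Simplification of the operator coefficients of the homogeneous Yang–Baxter deformed coupled action (Appendix D). Let A be a unital associative algebra over ℂ, let R ∈ A, let N ≥ 2, let ℓ ∈ ℂ be nonzero, and let ρ_rs ∈ ℂ for r, s ∈ {1, …, N}. Set ϑ = 2ρ_{NN}/ℓ and Õ_rs = ρ_rs·1 − (2ρ_{rN}ρ_{Ns}/ℓ) R, and assume 1 − ϑR is invertible in A. Then for all r, s ∈ {1, …, N}: Õ_rs + (2ρ_{rN} Õ_{Ns} + 2ρ_{Ns} Õ_{rN}) ℓ^{−1} R (1−ϑR)^{−1} + 4ρ_{rN}ρ_{Ns} ℓ^{−2} Õ_{NN} R² (1−ϑR)^{−2} = ρ_rs·1 + (2ρ_{rN}ρ_{Ns}/ℓ) R (1−ϑR)^{−1}. In particular, when s = N this expression equals ρ_{rN} (1−ϑR)^{−1}, and when r = N it equals ρ_{Nr} (1−ϑR)^{−1}. -/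

import Mathlib

/-- The operator `Õ_{rs} = ρ_{rs}·1 - (2 b c/ℓ) R` appearing in the homogeneous Yang–Baxter
deformed coupled action, with `a = ρ_{rs}`, `b = ρ_{rN}`, `c = ρ_{Ns}`. -/
noncomputable def Otil {A : Type*} [Ring A] [Algebra ℂ A]
    (ℓ : ℂ) (R : A) (a b c : ℂ) : A :=
  a • (1 : A) - (2 * b * c / ℓ) • R

/-! With `ϑ = 2ρ_{NN}/ℓ`, the operators `Õ_{Ns}`, `Õ_{rN}` and `Õ_{NN}` are scalar multiples of
`1 - ϑR`, so each of them cancels one factor of `(1 - ϑR)⁻¹`. What remains collapses by the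
resolvent identity `(1 - ϑR)⁻¹ = 1 + ϑR(1 - ϑR)⁻¹`, which also gives the cases `s = N`, `r = N`. -/

theorem Commute.ring_inverse_right {M₀ : Type*} [MonoidWithZero M₀] {a x : M₀}
    (h : Commute a x) : Commute a (Ring.inverse x) := by
  by_cases hx : IsUnit x
  · obtain ⟨u, rfl⟩ := hx
    rw [Ring.inverse_unit]
    exact h.units_inv_right
  · rw [Ring.inverse_non_unit x hx]
    exact Commute.zero_right a

theorem mul_mul_inverse_pow_succ {M₀ : Type*} [MonoidWithZero M₀] {x y : M₀}
    (hx : IsUnit x) (h : Commute x y) (n : ℕ) :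
    x * (y * Ring.inverse x ^ (n + 1)) = y * Ring.inverse x ^ n := by
  have hc : Commute x (y * Ring.inverse x ^ n) :=
    h.mul_right ((Commute.refl x).ring_inverse_right.pow_right n)
  rw [pow_succ, ← mul_assoc, ← mul_assoc, mul_assoc x y, hc.eq, mul_assoc,
    Ring.mul_inverse_cancel x hx, mul_one]

theorem Ring.inverse_one_sub {α : Type*} [Ring α] {y : α} (h : IsUnit (1 - y)) :
    Ring.inverse (1 - y) = 1 + y * Ring.inverse (1 - y) := by
  rw [← sub_eq_iff_eq_add, ← one_sub_mul, Ring.mul_inverse_cancel _ h]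

section

variable {k A : Type*} [CommRing k] [Ring A] [Algebra k A] {ϑ : k} {R : A}

theorem mul_inverse_one_sub_smul (h : IsUnit (1 - ϑ • R)) :
    R * Ring.inverse (1 - ϑ • R) = R + ϑ • (R ^ 2 * Ring.inverse (1 - ϑ • R)) := by
  conv_lhs => rw [Ring.inverse_one_sub h]
  rw [mul_add, mul_one, smul_mul_assoc, mul_smul_comm, ← mul_assoc, ← sq]

theorem smul_one_add_smul_mul_inverse_one_sub_smul (h : IsUnit (1 - ϑ • R)) {c c' : k}
    (hc : c' = c * ϑ) :
    c • (1 : A) + c' • (R * Ring.inverse (1 - ϑ • R)) = c • Ring.inverse (1 - ϑ • R) := by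
  conv_rhs => rw [Ring.inverse_one_sub h]
  rw [hc, smul_mul_assoc, smul_add, smul_smul]

end

theorem Otil_eq_smul_one_sub {A : Type*} [Ring A] [Algebra ℂ A] {ℓ : ℂ} (R : A) {a b c ϑ : ℂ}
    (h : 2 * b * c / ℓ = a * ϑ) : Otil ℓ R a b c = a • (1 - ϑ • R) := by
  rw [Otil, h, smul_sub, smul_smul]

theorem hYB_operator_coefficient_identity_general
    {A : Type*} [Ring A] [Algebra ℂ A]
    (R : A) (N : ℕ) (ℓ : ℂ)
    (ρ : Fin N → Fin N → ℂ)
    (lN : Fin N)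
    (hinv : IsUnit (1 - (2 * ρ lN lN / ℓ) • R)) :
    (∀ r s : Fin N,
      Otil ℓ R (ρ r s) (ρ r lN) (ρ lN s)
        + ℓ⁻¹ • (((2 * ρ r lN) • Otil ℓ R (ρ lN s) (ρ lN lN) (ρ lN s)
            + (2 * ρ lN s) • Otil ℓ R (ρ r lN) (ρ r lN) (ρ lN lN))
          * (R * Ring.inverse (1 - (2 * ρ lN lN / ℓ) • R)))
        + (4 * ρ r lN * ρ lN s / ℓ ^ 2) •
            (Otil ℓ R (ρ lN lN) (ρ lN lN) (ρ lN lN)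
              * (R ^ 2 * (Ring.inverse (1 - (2 * ρ lN lN / ℓ) • R)) ^ 2))
      = ρ r s • (1 : A)
        + (2 * ρ r lN * ρ lN s / ℓ) • (R * Ring.inverse (1 - (2 * ρ lN lN / ℓ) • R))) ∧
    (∀ r : Fin N,
      ρ r lN • (1 : A)
          + (2 * ρ r lN * ρ lN lN / ℓ) • (R * Ring.inverse (1 - (2 * ρ lN lN / ℓ) • R))
        = ρ r lN • Ring.inverse (1 - (2 * ρ lN lN / ℓ) • R)) ∧
    (∀ s : Fin N,
      ρ lN s • (1 : A)
          + (2 * ρ lN lN * ρ lN s / ℓ) • (R * Ring.inverse (1 - (2 * ρ lN lN / ℓ) • R))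
        = ρ lN s • Ring.inverse (1 - (2 * ρ lN lN / ℓ) • R)) := by
  set ϑ := 2 * ρ lN lN / ℓ
  have hcomm : Commute (1 - ϑ • R) R :=
    (Commute.one_left R).sub_left ((Commute.refl R).smul_left ϑ)
  refine ⟨fun r s => ?_, fun r => smul_one_add_smul_mul_inverse_one_sub_smul hinv (by ring),
    fun s => smul_one_add_smul_mul_inverse_one_sub_smul hinv (by ring)⟩
  rw [Otil_eq_smul_one_sub R (a := ρ lN s) (ϑ := ϑ) (by ring),
    Otil_eq_smul_one_sub R (a := ρ r lN) (ϑ := ϑ) (by ring),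
    Otil_eq_smul_one_sub R (a := ρ lN lN) (ϑ := ϑ) (by ring), Otil]
  simp only [add_mul, smul_mul_assoc]
  have hR : (1 - ϑ • R) * (R * Ring.inverse (1 - ϑ • R)) = R := by
    simpa using mul_mul_inverse_pow_succ hinv hcomm 0
  have hR2 : (1 - ϑ • R) * (R ^ 2 * Ring.inverse (1 - ϑ • R) ^ 2) =
      R ^ 2 * Ring.inverse (1 - ϑ • R) := by
    simpa using mul_mul_inverse_pow_succ hinv (hcomm.pow_right 2) 1
  rw [hR, hR2, mul_inverse_one_sub_smul hinv]
  module

/-- **Simplification of the operator coefficients of the homogeneous Yang–Baxter deformed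
coupled action** (Appendix D).  With `ϑ = 2ρ_{NN}/ℓ` and `Õ_{rs} = ρ_{rs}·1 - (2ρ_{rN}ρ_{Ns}/ℓ)R`,
assuming `1 - ϑR` invertible,
`Õ_{rs} + (2ρ_{rN} Õ_{Ns} + 2ρ_{Ns} Õ_{rN}) ℓ⁻¹ R (1-ϑR)⁻¹ + 4ρ_{rN}ρ_{Ns} ℓ⁻² Õ_{NN} R² (1-ϑR)⁻²
  = ρ_{rs}·1 + (2ρ_{rN}ρ_{Ns}/ℓ) R (1-ϑR)⁻¹`;
in particular for `s = N` this equals `ρ_{rN}(1-ϑR)⁻¹`, and for `r = N` it equals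
`ρ_{Nr}(1-ϑR)⁻¹`. -/
theorem hYB_operator_coefficient_identity
    {A : Type*} [Ring A] [Algebra ℂ A]
    (R : A) (N : ℕ) (hN : 2 ≤ N) (ℓ : ℂ) (hℓ : ℓ ≠ 0)
    (ρ : Fin N → Fin N → ℂ)
    (lN : Fin N) (hlN : (lN : ℕ) = N - 1)
    (hinv : IsUnit (1 - (2 * ρ lN lN / ℓ) • R)) :
    (∀ r s : Fin N,
      Otil ℓ R (ρ r s) (ρ r lN) (ρ lN s)
        + ℓ⁻¹ • (((2 * ρ r lN) • Otil ℓ R (ρ lN s) (ρ lN lN) (ρ lN s)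
            + (2 * ρ lN s) • Otil ℓ R (ρ r lN) (ρ r lN) (ρ lN lN))
          * (R * Ring.inverse (1 - (2 * ρ lN lN / ℓ) • R)))
        + (4 * ρ r lN * ρ lN s / ℓ ^ 2) •
            (Otil ℓ R (ρ lN lN) (ρ lN lN) (ρ lN lN)
              * (R ^ 2 * (Ring.inverse (1 - (2 * ρ lN lN / ℓ) • R)) ^ 2))
      = ρ r s • (1 : A)
        + (2 * ρ r lN * ρ lN s / ℓ) • (R * Ring.inverse (1 - (2 * ρ lN lN / ℓ) • R))) ∧
    (∀ r : Fin N,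
      ρ r lN • (1 : A)
          + (2 * ρ r lN * ρ lN lN / ℓ) • (R * Ring.inverse (1 - (2 * ρ lN lN / ℓ) • R))
        = ρ r lN • Ring.inverse (1 - (2 * ρ lN lN / ℓ) • R)) ∧
    (∀ s : Fin N,
      ρ lN s • (1 : A)
          + (2 * ρ lN lN * ρ lN s / ℓ) • (R * Ring.inverse (1 - (2 * ρ lN lN / ℓ) • R))
        = ρ lN s • Ring.inverse (1 - (2 * ρ lN lN / ℓ) • R)) :=
  hYB_operator_coefficient_identity_general R N ℓ ρ lN hinv
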